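/- arXiv:1806.10053 — 2 statements merged into one kernel-verified Lean document; each statement's English description precedes it below -/
import Mathlib

section
/- For every positive integer n and real number x, the sum over all set partitions w of {1,...,n} of x^(number of parts of w) times the product over parts of (size of the part)! times (number of parts of w − 1)! equals (n−1)!·((1+x)^n − 1). -/
/-!
Let `W(s) = ∑_P x^t t! ∏_{B ∈ P} |B|!`, summed over the partitions `P` of `s` into `t` blocks.
Marking one block of a partition and removing it is a bijection onto the pairs (nonempty
`B ⊆ s`, partition of `s \ B`); the factor `t! = t (t-1)!` accounts for the choice of the mark, so
`W(s) = ∑_{B ≠ ∅} x |B|! W(s \ B)`, and induction gives `W(s) = |s|! c(|s|)` with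
`c(m) = x (1 + x)^(m-1)` (the sum of `x^k` over the compositions of `m` into `k` parts), `c(0) = 1`.
Marking instead each block `B` with weight `|B|`, which sum to `|s|`, turns `|s|` times the sum
of the theorem into `∑_B |B| x |B|! W(s \ B)`, a binomial convolution equal to
`|s|! ((1 + x)^|s| - 1)`.
-/

open Finset

namespace Finpartition

variable {α : Type*} [DecidableEq α] {s B : Finset α}

def erasePart (P : Finpartition s) (hB : B ∈ P.parts) : Finpartition (s \ B) :=
  P.ofSubset (erase_subset B P.parts) <| by
    have hdisj : Disjoint B ((P.parts.erase B).sup id) :=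
      P.supIndep (erase_subset B P.parts) hB (notMem_erase B _)
    have hs := P.sup_parts
    rw [← insert_erase hB, sup_insert] at hs
    calc (P.parts.erase B).sup id = (B ⊔ (P.parts.erase B).sup id) \ B := by
          rw [sup_eq_union, union_sdiff_left, hdisj.symm.sdiff_eq_left]
      _ = s \ B := congrArg (· \ B) hs

@[simp] lemma erasePart_parts (P : Finpartition s) (hB : B ∈ P.parts) :
    (P.erasePart hB).parts = P.parts.erase B := rfl

theorem sum_sum_parts_erase {M : Type*} [AddCommMonoid M] (s : Finset α)
    (f : Finset α → Finset (Finset α) → M) :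
    ∑ P : Finpartition s, ∑ B ∈ P.parts, f B (P.parts.erase B) =
      ∑ B ∈ s.powerset with B.Nonempty, ∑ Q : Finpartition (s \ B), f B Q.parts := by
  rw [sum_sigma', sum_sigma']
  refine sum_bij' (fun x hx => ⟨x.2, x.1.erasePart (mem_sigma.1 hx).2⟩)
    (fun y hy => ⟨y.2.extend (b := y.1) ?_ sdiff_disjoint ?_, y.1⟩) ?_ ?_ ?_ ?_ ?_
  · exact (mem_filter.1 (mem_sigma.1 hy).1).2.ne_empty
  · exact sdiff_union_of_subset (mem_powerset.1 (mem_filter.1 (mem_sigma.1 hy).1).1)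
  · rintro ⟨P, B⟩ hB
    simp only [mem_sigma, mem_univ, true_and] at hB
    simpa [mem_sigma] using ⟨P.le hB, P.nonempty_of_mem_parts hB⟩
  · rintro ⟨B, Q⟩ -
    simp [mem_sigma]
  · rintro ⟨P, B⟩ hB
    simp only [mem_sigma, mem_univ, true_and] at hB
    congr
    ext1
    simp [insert_erase hB]
  · rintro ⟨B, Q⟩ hB
    obtain ⟨b, hb⟩ := (mem_filter.1 (mem_sigma.1 hB).1).2
    have hBQ : B ∉ Q.parts := fun h => (mem_sdiff.1 (Q.le h hb)).2 hb
    congr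
    ext1
    simp [erase_insert hBQ]
  · intros
    rfl

end Finpartition

open Nat

section

variable {R : Type*} [CommRing R]

def compositionSum (x : R) : ℕ → R
  | 0 => 1
  | m + 1 => x * (1 + x) ^ m

theorem sum_antidiagonal_compositionSum (x : R) (m : ℕ) :
    ∑ p ∈ antidiagonal m, compositionSum x p.2 = (1 + x) ^ m := by
  induction m with
  | zero => simp [compositionSum]
  | succ m ih =>
    rw [Nat.sum_antidiagonal_succ, ih, compositionSum]
    ring

theorem mul_sum_antidiagonal_fst_mul_compositionSum (x : R) (m : ℕ) :
    x * ∑ p ∈ antidiagonal m, (p.1 : R) * compositionSum x p.2 = (1 + x) ^ m - 1 := by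
  induction m with
  | zero => simp
  | succ m ih =>
    simp only [Nat.sum_antidiagonal_succ, Nat.cast_zero, zero_mul, zero_add, Nat.cast_add_one,
      add_mul, one_mul, sum_add_distrib, mul_add, ih, sum_antidiagonal_compositionSum]
    ring

variable {α : Type*} [DecidableEq α]

theorem sum_powerset_factorial_mul_factorial_mul (s : Finset α) (g : ℕ → ℕ → R) :
    ∑ B ∈ s.powerset, ((#B)! * (#(s \ B))! : R) * g #B #(s \ B) =
      (#s)! * ∑ p ∈ antidiagonal #s, g p.1 p.2 := by
  rw [sum_powerset, mul_sum,
    Nat.sum_antidiagonal_eq_sum_range_succ fun i j => ((#s)! : R) * g i j]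
  refine sum_congr rfl fun k hk => ?_
  rw [sum_congr rfl fun B hB => by rw [card_sdiff_of_subset (mem_powersetCard.1 hB).1],
    sum_powersetCard k s fun i => (i ! : R) * (#s - i)! * g i (#s - i), nsmul_eq_mul,
    ← Nat.choose_mul_factorial_mul_factorial (mem_range_succ_iff.1 hk)]
  push_cast
  ring

def blockWeight (x : R) (P : Finset (Finset α)) : R :=
  x ^ #P * (∏ p ∈ P, ((#p)! : R)) * (#P)!

theorem mul_blockWeight_erase (x : R) {P : Finset (Finset α)} {B : Finset α} (hB : B ∈ P) :
    x * (#B)! * blockWeight x (P.erase B) = x ^ #P * (∏ p ∈ P, ((#p)! : R)) * (#P - 1)! := by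
  rw [blockWeight, card_erase_of_mem hB, ← mul_prod_erase P _ hB,
    ← Nat.succ_pred_eq_of_pos (card_pos.2 ⟨B, hB⟩), pow_succ, Nat.pred_eq_sub_one]
  simp only [Nat.succ_sub_one]
  ring

theorem blockWeight_eq_sum_erase (x : R) {P : Finset (Finset α)} (hP : P.Nonempty) :
    blockWeight x P = ∑ B ∈ P, x * (#B)! * blockWeight x (P.erase B) := by
  rw [sum_congr rfl fun B hB => mul_blockWeight_erase x hB, sum_const, nsmul_eq_mul, blockWeight,
    ← Nat.mul_factorial_pred hP.card_pos.ne']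
  push_cast
  ring

def blockWeightSum (x : R) (s : Finset α) : R :=
  ∑ P : Finpartition s, blockWeight x P.parts

theorem blockWeightSum_empty (x : R) : blockWeightSum x (∅ : Finset α) = 1 := by
  have : Unique (Finpartition (∅ : Finset α)) := inferInstanceAs (Unique (Finpartition ⊥))
  rw [blockWeightSum, Fintype.sum_unique, Finpartition.parts_eq_empty_iff.2 rfl]
  simp [blockWeight]

theorem blockWeightSum_eq_sum_powerset (x : R) {s : Finset α} (hs : s.Nonempty) :
    blockWeightSum x s =
      ∑ B ∈ s.powerset with B.Nonempty, x * (#B)! * blockWeightSum x (s \ B) := by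
  simp only [blockWeightSum, mul_sum]
  rw [← Finpartition.sum_sum_parts_erase s fun B Q => x * (#B)! * blockWeight x Q]
  exact sum_congr rfl fun P _ => blockWeight_eq_sum_erase x (P.parts_nonempty hs.ne_empty)

theorem blockWeightSum_eq (x : R) (s : Finset α) :
    blockWeightSum x s = (#s)! * compositionSum x #s := by
  induction s using Finset.strongInduction with
  | H s ih =>
  obtain rfl | hs := s.eq_empty_or_nonempty
  · simp [blockWeightSum_empty, compositionSum]
  obtain ⟨m, hm⟩ := Nat.exists_eq_add_one_of_ne_zero hs.card_pos.ne'
  have hfilter : s.powerset.filter (·.Nonempty) = s.powerset.erase ∅ := by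
    ext B
    simp [nonempty_iff_ne_empty, and_comm]
  have hsum := sum_powerset_factorial_mul_factorial_mul s fun _ j => x * compositionSum x j
  rw [← mul_sum, sum_antidiagonal_compositionSum,
    ← add_sum_erase _ _ (empty_mem_powerset s)] at hsum
  rw [blockWeightSum_eq_sum_powerset x hs, hfilter]
  have hterm : ∀ B ∈ s.powerset.erase ∅, x * (#B)! * blockWeightSum x (s \ B) =
      (#B)! * (#(s \ B))! * (x * compositionSum x #(s \ B)) := fun B hB => by
    obtain ⟨hB, hBs⟩ := mem_erase.1 hB
    rw [ih _ (sdiff_ssubset (mem_powerset.1 hBs) (nonempty_iff_ne_empty.2 hB))]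
    ring
  rw [sum_congr rfl hterm]
  simp only [card_empty, sdiff_empty, factorial_zero, Nat.cast_one, one_mul] at hsum
  rw [hm, compositionSum] at hsum ⊢
  linear_combination hsum

theorem card_mul_sum_finpartition (x : R) (s : Finset α) :
    (#s : R) * ∑ P : Finpartition s,
      x ^ #P.parts * (∏ p ∈ P.parts, ((#p)! : R)) * (#P.parts - 1)! =
      (#s)! * ((1 + x) ^ #s - 1) := by
  calc (#s : R) * ∑ P : Finpartition s,
        x ^ #P.parts * (∏ p ∈ P.parts, ((#p)! : R)) * (#P.parts - 1)!
      = ∑ P : Finpartition s, ∑ B ∈ P.parts,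
          (#B : R) * (x * (#B)! * blockWeight x (P.parts.erase B)) := by
        refine mul_sum _ _ _ |>.trans <| sum_congr rfl fun P _ => ?_
        rw [← P.sum_card_parts, Nat.cast_sum, sum_mul]
        exact sum_congr rfl fun B hB => by rw [mul_blockWeight_erase x hB]
    _ = ∑ B ∈ s.powerset with B.Nonempty,
          (#B : R) * (x * (#B)! * blockWeightSum x (s \ B)) := by
        rw [Finpartition.sum_sum_parts_erase s fun B Q => (#B : R) * (x * (#B)! * blockWeight x Q)]
        simp only [blockWeightSum, mul_sum]
    _ = ∑ B ∈ s.powerset, ((#B)! * (#(s \ B))! : R) * (#B * x * compositionSum x #(s \ B)) := by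
        rw [sum_filter_of_ne fun B _ hB => ?_]
        · refine sum_congr rfl fun B _ => ?_
          rw [blockWeightSum_eq]
          ring
        · refine nonempty_iff_ne_empty.2 fun hB' => hB ?_
          simp [hB']
    _ = (#s)! * ((1 + x) ^ #s - 1) := by
        rw [sum_powerset_factorial_mul_factorial_mul s fun i j => (i : R) * x * compositionSum x j,
          ← mul_sum_antidiagonal_fst_mul_compositionSum, mul_sum _ _ x]
        congr 1
        exact sum_congr rfl fun p _ => by ring

end

theorem g_eval (n : ℕ) (hn : 0 < n) (x : ℝ) :
    ∑ w : Finpartition (Finset.univ : Finset (Fin n)),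
      x ^ w.parts.card * (∏ p ∈ w.parts, (Nat.factorial p.card : ℝ)) *
        (Nat.factorial (w.parts.card - 1) : ℝ)
    = (Nat.factorial (n - 1) : ℝ) * ((1 + x) ^ n - 1) := by
  have h := card_mul_sum_finpartition x (univ : Finset (Fin n))
  rw [Finset.card_univ, Fintype.card_fin, ← Nat.mul_factorial_pred hn.ne', Nat.cast_mul,
    mul_assoc] at h
  exact mul_left_cancel₀ (Nat.cast_ne_zero.2 hn.ne') h
end

section
/- For positive integers n and 1 ≤ i ≤ n, the sum over all set partitions of {1,...,n} into exactly i nonempty parts of i! times the product over the parts of (size of the part)! equals n! · C(n−1, i−1). -/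
open Finset

namespace OOPC

variable {n : ℕ}

abbrev T (n : ℕ) := Equiv.Perm (Fin n) × Composition n

/-- the k-th block of the ordered-ordered partition `p`, as a set -/
def B (p : T n) (k : Fin p.2.length) : Finset (Fin n) :=
  univ.filter fun x => p.2.index (p.1⁻¹ x) = k

lemma mem_B {p : T n} {k} {x} : x ∈ B p k ↔ p.2.index (p.1⁻¹ x) = k := by simp [B]

lemma B_nonempty (p : T n) (k) : (B p k).Nonempty :=
  ⟨p.1 (p.2.embedding k ⟨0, p.2.one_le_blocksFun k⟩), by
    simp [mem_B, Composition.index_embedding]⟩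

lemma B_disjoint {p : T n} {k k'} (h : k ≠ k') : Disjoint (B p k) (B p k') := by
  rw [Finset.disjoint_left]
  intro x hx hx'
  exact h (mem_B.1 hx ▸ mem_B.1 hx' ▸ rfl)

lemma B_inj (p : T n) : Function.Injective (B p) := by
  intro k k' h
  obtain ⟨x, hx⟩ := B_nonempty p k
  have hx' : x ∈ B p k' := h ▸ hx
  exact mem_B.1 hx ▸ mem_B.1 hx' ▸ rfl

lemma card_index_fiber (c : Composition n) (k : Fin c.length) :
    (univ.filter fun y : Fin n => c.index y = k).card = c.blocksFun k := by
  have : (univ.filter fun y : Fin n => c.index y = k)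
      = univ.image (fun j : Fin (c.blocksFun k) => c.embedding k j) := by
    ext y
    simp only [mem_filter, mem_univ, true_and, mem_image]
    constructor
    · intro h
      obtain ⟨j, hj⟩ := (c.mem_range_embedding_iff' (i := k)).2 h.symm
      exact ⟨j, hj⟩
    · rintro ⟨j, rfl⟩
      exact c.index_embedding k j
  rw [this, Finset.card_image_of_injective _ (c.embedding k).injective, card_univ,
    Fintype.card_fin]

lemma B_card (p : T n) (k) : (B p k).card = p.2.blocksFun k := by
  have : B p k = (univ.filter fun y : Fin n => p.2.index y = k).image p.1 := by
    ext x
    simp only [mem_B, mem_image, mem_filter, mem_univ, true_and]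
    constructor
    · intro h
      exact ⟨p.1⁻¹ x, h, by simp⟩
    · rintro ⟨y, hy, rfl⟩
      simpa using hy
  rw [this, Finset.card_image_of_injective _ p.1.injective, card_index_fiber]

/-- The set partition underlying `p`. -/
def phi (p : T n) : Finpartition (univ : Finset (Fin n)) where
  parts := (univ : Finset (Fin p.2.length)).image (B p)
  supIndep := by
    rw [Finset.supIndep_iff_pairwiseDisjoint]
    rintro a ha b hb hab
    simp only [coe_image, coe_univ, Set.image_univ, Set.mem_range] at ha hb
    obtain ⟨k, rfl⟩ := ha
    obtain ⟨k', rfl⟩ := hb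
    exact B_disjoint (fun h => hab (h ▸ rfl))
  sup_parts := by
    apply Finset.Subset.antisymm (fun x _ => mem_univ x)
    intro x _
    rw [Finset.mem_sup]
    exact ⟨B p (p.2.index (p.1⁻¹ x)), Finset.mem_image_of_mem _ (mem_univ _), mem_B.2 rfl⟩
  bot_notMem := by
    simp only [bot_eq_empty, mem_image, not_exists]
    intro k
    intro h
    obtain ⟨x, hx⟩ := B_nonempty p k
    rw [h.2] at hx
    exact notMem_empty _ hx

lemma parts_phi (p : T n) : (phi p).parts = (univ : Finset (Fin p.2.length)).image (B p) := rfl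

lemma card_parts_phi (p : T n) : (phi p).parts.card = p.2.length := by
  rw [parts_phi, Finset.card_image_of_injective _ (B_inj p), card_univ, Fintype.card_fin]


lemma card_perm_fibers {α ι : Type*} [Fintype α] [DecidableEq α] [Fintype ι] [DecidableEq ι]
    (f₁ f₂ : α → ι) (h : ∀ k, Fintype.card {a // f₁ a = k} = Fintype.card {a // f₂ a = k}) :
    Fintype.card {σ : Equiv.Perm α // f₂ ∘ σ = f₁}
      = ∏ k, (Fintype.card {a // f₁ a = k}).factorial := by
  have e : ∀ k, {a // f₁ a = k} ≃ {a // f₂ a = k} := fun k => Fintype.equivOfCardEq (h k)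
  set τ : α ≃ α := (Equiv.sigmaFiberEquiv f₁).symm.trans
    ((Equiv.sigmaCongrRight e).trans (Equiv.sigmaFiberEquiv f₂)) with hτdef
  have hτ : ∀ a, f₂ (τ a) = f₁ a := by
    intro a
    simp only [hτdef, Equiv.trans_apply, Equiv.sigmaFiberEquiv, Equiv.sigmaCongrRight,
      Equiv.coe_fn_symm_mk, Equiv.coe_fn_mk]
    exact (e (f₁ a) ⟨a, rfl⟩).2
  have hτ' : ∀ a, f₁ (τ.symm a) = f₂ a := fun a => by
    conv_rhs => rw [← τ.apply_symm_apply a, hτ]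
  have E : {σ : Equiv.Perm α // f₂ ∘ σ = f₁} ≃ {σ : Equiv.Perm α // f₁ ∘ σ = f₁} :=
    { toFun := fun s => ⟨s.1.trans τ.symm, by
        funext x
        simp only [Function.comp_apply, Equiv.trans_apply, hτ']
        exact congrFun s.2 x⟩
      invFun := fun s => ⟨s.1.trans τ, by
        funext x
        simp only [Function.comp_apply, Equiv.trans_apply, hτ]
        exact congrFun s.2 x⟩
      left_inv := fun s => by
        ext x
        simp
      right_inv := fun s => by
        ext x
        simp }
  rw [Fintype.card_congr E, DomMulAct.stabilizer_card f₁]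


lemma card_compositionAsSetEquiv (n : ℕ) (hn : 0 < n) (cs : CompositionAsSet n) :
    (compositionAsSetEquiv n cs).card + 2 = cs.boundaries.card := by
  classical
  set emb : Fin (n - 1) → Fin (n + 1) := fun j =>
    ⟨1 + (j : ℕ), by omega⟩ with hemb
  have hembinj : Function.Injective emb := by
    intro a b hab
    have : 1 + (a : ℕ) = 1 + (b : ℕ) := congrArg Fin.val hab
    exact Fin.ext (by omega)
  have h1 : compositionAsSetEquiv n cs = univ.filter fun j => emb j ∈ cs.boundaries := by
    ext j
    simp [compositionAsSetEquiv, hemb]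
  have h2 : (univ.filter fun j => emb j ∈ cs.boundaries).image emb
      = (cs.boundaries.erase 0).erase (Fin.last n) := by
    ext x
    simp only [mem_image, mem_filter, mem_univ, true_and, mem_erase]
    constructor
    · rintro ⟨j, hj, rfl⟩
      refine ⟨?_, ?_, hj⟩
      · intro h
        have : 1 + (j : ℕ) = n := congrArg Fin.val h
        have := j.2
        omega
      · intro h
        have : 1 + (j : ℕ) = 0 := congrArg Fin.val h
        omega
    · rintro ⟨hlast, h0, hx⟩
      have hx0 : (x : ℕ) ≠ 0 := fun h => h0 (Fin.ext h)
      have hxn : (x : ℕ) ≠ n := fun h => hlast (Fin.ext h)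
      have hxlt : (x : ℕ) < n + 1 := x.2
      refine ⟨⟨(x : ℕ) - 1, by omega⟩, ?_, ?_⟩
      · convert hx
        apply Fin.ext
        simp only [hemb]
        omega
      · apply Fin.ext
        simp only [hemb]
        omega
  have h3 : ((cs.boundaries.erase 0).erase (Fin.last n)).card = cs.boundaries.card - 2 := by
    rw [Finset.card_erase_of_mem, Finset.card_erase_of_mem cs.zero_mem]
    · omega
    · refine Finset.mem_erase.2 ⟨?_, cs.getLast_mem⟩
      intro h
      have : n = 0 := congrArg Fin.val h
      omega
  have h4 : (compositionAsSetEquiv n cs).card = cs.boundaries.card - 2 := by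
    rw [h1, ← Finset.card_image_of_injective _ hembinj, h2, h3]
  have h5 : 2 ≤ cs.boundaries.card := by
    have : ({(0 : Fin (n+1)), Fin.last n} : Finset (Fin (n+1))) ⊆ cs.boundaries := by
      intro x hx
      simp only [mem_insert, mem_singleton] at hx
      rcases hx with rfl | rfl
      · exact cs.zero_mem
      · exact cs.getLast_mem
    have h02 : ({(0 : Fin (n+1)), Fin.last n} : Finset (Fin (n+1))).card = 2 := by
      rw [Finset.card_insert_of_notMem, Finset.card_singleton]
      simp only [mem_singleton]
      intro h
      have : (0 : ℕ) = n := congrArg Fin.val h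
      omega
    calc 2 = ({(0 : Fin (n+1)), Fin.last n} : Finset (Fin (n+1))).card := h02.symm
    _ ≤ _ := Finset.card_le_card this
  omega

lemma card_length_comp (c : Composition n) (hn : 0 < n) :
    (((compositionEquiv n).trans (compositionAsSetEquiv n)) c).card + 1 = c.length := by
  have h := card_compositionAsSetEquiv n hn c.toCompositionAsSet
  rw [c.toCompositionAsSet.card_boundaries_eq_succ_length, c.toCompositionAsSet_length] at h
  have : ((compositionEquiv n).trans (compositionAsSetEquiv n)) c
      = compositionAsSetEquiv n c.toCompositionAsSet := rfl
  rw [this]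
  omega

lemma card_compositions (n i : ℕ) (hn : 0 < n) (hi1 : 1 ≤ i) :
    ((univ : Finset (Composition n)).filter fun c => c.length = i).card
      = Nat.choose (n - 1) (i - 1) := by
  classical
  set E := (compositionEquiv n).trans (compositionAsSetEquiv n) with hE
  have key : ((univ : Finset (Composition n)).filter fun c => c.length = i).card
      = ((univ : Finset (Finset (Fin (n - 1)))).filter fun S => S.card = i - 1).card := by
    apply Finset.card_bij (fun c _ => E c)
    · intro c hc
      simp only [mem_filter, mem_univ, true_and] at hc ⊢
      have h2 := card_length_comp c hn
      rw [← hE] at h2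
      omega
    · intro a _ b _ hab
      exact E.injective hab
    · intro S hS
      refine ⟨E.symm S, ?_, by simp⟩
      simp only [mem_filter, mem_univ, true_and] at hS ⊢
      have h2 := card_length_comp (E.symm S) hn
      rw [← hE, Equiv.apply_symm_apply] at h2
      omega
  rw [key]
  have : ((univ : Finset (Finset (Fin (n - 1)))).filter fun S => S.card = i - 1)
      = Finset.powersetCard (i - 1) univ := by
    ext S
    simp [Finset.mem_powersetCard_univ]
  rw [this, Finset.card_powersetCard, card_univ, Fintype.card_fin]


variable {i : ℕ}

def chi (i : ℕ) (p : T n) (k : Fin i) : Finset (Fin n) :=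
  univ.filter fun x => ((p.2.index (p.1⁻¹ x)) : ℕ) = (k : ℕ)

lemma chi_eq_B {p : T n} (hc : p.2.length = i) (k : Fin i) :
    chi i p k = B p ⟨k, hc ▸ k.2⟩ := by
  ext x
  simp only [chi, mem_filter, mem_univ, true_and, mem_B, Fin.ext_iff]

lemma chi_card {p : T n} (hc : p.2.length = i) (k : Fin i) :
    (chi i p k).card = p.2.blocksFun ⟨k, hc ▸ k.2⟩ := by
  rw [chi_eq_B hc, B_card]

/-- The composition associated to an ordered list of blocks. -/
def compOf (g : Fin i → Finset (Fin n)) (hpos : ∀ k, (g k).Nonempty)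
    (hsum : ∑ k, (g k).card = n) : Composition n where
  blocks := List.ofFn fun k => (g k).card
  blocks_pos := by
    intro j hj
    rw [List.mem_ofFn] at hj
    obtain ⟨k, rfl⟩ := hj
    exact Finset.card_pos.2 (hpos k)
  blocks_sum := by rw [List.sum_ofFn, hsum]

lemma compOf_length (g : Fin i → Finset (Fin n)) (hpos) (hsum) :
    (compOf g hpos hsum).length = i := by
  simp [compOf, Composition.length]

lemma compOf_blocksFun (g : Fin i → Finset (Fin n)) (hpos) (hsum) (j : ℕ) (h : j < i)
    (h' : j < (compOf g hpos hsum).length) :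
    (compOf g hpos hsum).blocksFun ⟨j, h'⟩ = (g ⟨j, h⟩).card := by
  simp [compOf, Composition.blocksFun, List.get_ofFn]

lemma comp_eq (c c' : Composition n) (hl : c.length = c'.length)
    (hb : ∀ j (h : j < c.length) (h' : j < c'.length),
      c.blocksFun ⟨j, h⟩ = c'.blocksFun ⟨j, h'⟩) : c = c' := by
  have hblocks : c.blocks = c'.blocks := by
    apply List.ext_getElem hl
    intro j h h'
    exact hb j h h'
  cases c; cases c'
  simpa using hblocks


lemma mem_chi {i : ℕ} {p : T n} {k : Fin i} {x} :
    x ∈ chi i p k ↔ ((p.2.index (p.1⁻¹ x)) : ℕ) = (k : ℕ) := by simp [chi]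


lemma image_g_eq_parts {w : Finpartition (univ : Finset (Fin n))} (hw : w.parts.card = i)
    {g : Fin i → Finset (Fin n)} (hg1 : ∀ k, g k ∈ w.parts) (hg2 : Function.Injective g) :
    univ.image g = w.parts := by
  apply Finset.eq_of_subset_of_card_le
  · intro q hq
    rw [mem_image] at hq
    obtain ⟨k, _, rfl⟩ := hq
    exact hg1 k
  · rw [Finset.card_image_of_injective _ hg2, card_univ, Fintype.card_fin, hw]

lemma card_fiber_g (w : Finpartition (univ : Finset (Fin n))) (hw : w.parts.card = i)
    (g : Fin i → Finset (Fin n)) (hg1 : ∀ k, g k ∈ w.parts) (hg2 : Function.Injective g) :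
    (((univ : Finset (T n)).filter fun p => p.2.length = i).filter fun p => chi i p = g).card
      = ∏ q ∈ w.parts, (q.card).factorial := by
  classical
  have hpos : ∀ k, (g k).Nonempty := fun k => w.nonempty_of_mem_parts (hg1 k)
  have hsum : ∑ k, (g k).card = n := by
    have h1 : ∑ q ∈ univ.image g, q.card = ∑ k, (g k).card :=
      Finset.sum_image fun a _ b _ h => hg2 h
    rw [← h1, image_g_eq_parts hw hg1 hg2, Finpartition.sum_card_parts, card_univ,
      Fintype.card_fin]
  set c₀ := compOf g hpos hsum with hc₀
  have hlen : c₀.length = i := compOf_length g hpos hsum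
  -- Step A : the fiber is the image of the sigma-only fiber
  have stepA : (((univ : Finset (T n)).filter fun p => p.2.length = i).filter
        fun p => chi i p = g)
      = (univ.filter fun σ : Equiv.Perm (Fin n) => chi i (σ, c₀) = g).image
          fun σ => (σ, c₀) := by
    ext p
    obtain ⟨σ, c⟩ := p
    simp only [mem_filter, mem_univ, true_and, mem_image]
    constructor
    · rintro ⟨hc, hchi⟩
      have hcc : c = c₀ := by
        apply comp_eq c c₀ (by rw [hc, hlen])
        intro j h h'
        have hj : j < i := by omega
        have h1 : c.blocksFun ⟨j, h⟩ = (chi i (σ, c) ⟨j, hj⟩).card := by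
          rw [chi_card hc ⟨j, hj⟩]
        rw [h1, hchi, compOf_blocksFun g hpos hsum j hj h']
      exact ⟨σ, by rw [← hcc]; exact hchi, by rw [hcc]⟩
    · rintro ⟨σ', hσ', h⟩
      obtain ⟨rfl, rfl⟩ : σ' = σ ∧ c₀ = c := by
        constructor <;> · injection h <;> simp_all
      exact ⟨hlen, hσ'⟩
  rw [stepA, Finset.card_image_of_injective _ (fun a b h => by simpa using h)]
  -- Step B : counting the permutations
  have hxu : ∀ x : Fin n, ∃! k, k ∈ (univ : Finset (Fin i)) ∧ x ∈ g k := by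
    intro x
    have hx : x ∈ (univ : Finset (Fin n)) := mem_univ x
    obtain ⟨q, hq, hxq⟩ := w.exists_mem hx
    rw [← image_g_eq_parts hw hg1 hg2, mem_image] at hq
    obtain ⟨k, _, rfl⟩ := hq
    refine ⟨k, ⟨mem_univ k, hxq⟩, ?_⟩
    rintro k' ⟨-, hxk'⟩
    apply hg2
    exact w.eq_of_mem_parts (hg1 k') (hg1 k) hxk' hxq
  set gIdx : Fin n → Fin i := fun x => Finset.choose (fun k => x ∈ g k) univ (hxu x) with hgIdx
  have hgIdx_mem : ∀ x, x ∈ g (gIdx x) := fun x => Finset.choose_property _ _ (hxu x)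
  have hgIdx_eq : ∀ x k, x ∈ g k → gIdx x = k := by
    intro x k hk
    exact ExistsUnique.unique (hxu x) ⟨mem_univ _, hgIdx_mem x⟩ ⟨mem_univ _, hk⟩
  set cIdx : Fin n → Fin i := fun y => ⟨(c₀.index y : ℕ), by
    have := (c₀.index y).2; omega⟩ with hcIdx
  have key : ∀ σ : Equiv.Perm (Fin n), chi i (σ, c₀) = g ↔ gIdx ∘ σ = cIdx := by
    intro σ
    constructor
    · intro h
      funext y
      apply hgIdx_eq
      rw [← h]
      rw [mem_chi]
      simp [hcIdx]
    · intro h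
      funext k
      ext x
      rw [mem_chi]
      have h1 : gIdx x = cIdx (σ⁻¹ x) := by
        have := congrFun h (σ⁻¹ x)
        simpa using this
      constructor
      · intro hh
        have : cIdx (σ⁻¹ x) = k := by apply Fin.ext; simpa [hcIdx] using hh
        rw [this] at h1
        rw [← h1]
        exact hgIdx_mem x
      · intro hh
        have : gIdx x = k := hgIdx_eq x k hh
        rw [this] at h1
        simpa [hcIdx] using congrArg Fin.val h1.symm
  have hcard1 : ∀ k : Fin i, Fintype.card {y : Fin n // cIdx y = k} = (g k).card := by
    intro k
    rw [Fintype.card_subtype]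
    have hkk : (k : ℕ) < c₀.length := by rw [hlen]; exact k.2
    have : (univ.filter fun y : Fin n => cIdx y = k)
        = univ.filter fun y : Fin n => c₀.index y = ⟨(k : ℕ), hkk⟩ := by
      ext y
      simp [hcIdx, Fin.ext_iff]
    rw [this, card_index_fiber, compOf_blocksFun g hpos hsum k k.2]
  have hcard2 : ∀ k : Fin i, Fintype.card {x : Fin n // gIdx x = k} = (g k).card := by
    intro k
    rw [Fintype.card_subtype]
    have : (univ.filter fun x : Fin n => gIdx x = k) = g k := by
      ext x
      simp only [mem_filter, mem_univ, true_and]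
      exact ⟨fun h => h ▸ hgIdx_mem x, fun h => hgIdx_eq x k h⟩
    rw [this]
  have hfilter : (univ.filter fun σ : Equiv.Perm (Fin n) => chi i (σ, c₀) = g)
      = univ.filter fun σ : Equiv.Perm (Fin n) => gIdx ∘ σ = cIdx := by
    ext σ
    simp only [mem_filter, mem_univ, true_and]
    exact key σ
  rw [hfilter, ← Fintype.card_subtype,
    card_perm_fibers cIdx gIdx (fun k => by rw [hcard1, hcard2])]
  have : ∀ k : Fin i, (Fintype.card {y : Fin n // cIdx y = k}).factorial
      = ((g k).card).factorial := fun k => by rw [hcard1]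
  rw [Finset.prod_congr rfl fun k _ => this k, ← image_g_eq_parts hw hg1 hg2,
    Finset.prod_image fun a _ b _ h => hg2 h]


lemma chi_inj {p : T n} (hc : p.2.length = i) : Function.Injective (chi i p) := by
  intro k k' h
  rw [chi_eq_B hc, chi_eq_B hc] at h
  have := B_inj p h
  have := congrArg Fin.val this
  exact Fin.ext this

lemma image_chi {p : T n} (hc : p.2.length = i) :
    (univ : Finset (Fin i)).image (chi i p) = (univ : Finset (Fin p.2.length)).image (B p) := by
  apply Finset.Subset.antisymm
  · intro q hq
    rw [mem_image] at hq
    obtain ⟨k, _, rfl⟩ := hq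
    rw [chi_eq_B hc]
    exact mem_image_of_mem _ (mem_univ _)
  · intro q hq
    rw [mem_image] at hq
    obtain ⟨k, _, rfl⟩ := hq
    rw [mem_image]
    refine ⟨⟨(k : ℕ), hc ▸ k.2⟩, mem_univ _, ?_⟩
    rw [chi_eq_B hc]

lemma card_orderings (w : Finpartition (univ : Finset (Fin n))) (hw : w.parts.card = i) :
    ((univ : Finset (Fin i → Finset (Fin n))).filter
        fun g => (∀ k, g k ∈ w.parts) ∧ Function.Injective g).card = Nat.factorial i := by
  classical
  rw [← Fintype.card_subtype]
  have E : {g : Fin i → Finset (Fin n) // (∀ k, g k ∈ w.parts) ∧ Function.Injective g}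
      ≃ (Fin i ↪ {q // q ∈ w.parts}) :=
    { toFun := fun s => ⟨fun k => ⟨s.1 k, s.2.1 k⟩,
        fun a b h => s.2.2 (congrArg Subtype.val h)⟩
      invFun := fun F => ⟨fun k => (F k).1,
        ⟨fun k => (F k).2, fun a b h => F.injective (Subtype.ext h)⟩⟩
      left_inv := fun s => rfl
      right_inv := fun F => rfl }
  rw [Fintype.card_congr E, Fintype.card_embedding_eq, Fintype.card_coe, hw, Fintype.card_fin,
    Nat.descFactorial_self]

lemma card_fiber_w (w : Finpartition (univ : Finset (Fin n))) (hw : w.parts.card = i) :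
    (((univ : Finset (T n)).filter fun p => p.2.length = i).filter fun p => phi p = w).card
      = Nat.factorial i * ∏ q ∈ w.parts, (q.card).factorial := by
  classical
  set A := ((univ : Finset (T n)).filter fun p => p.2.length = i) with hA
  set G := ((univ : Finset (Fin i → Finset (Fin n))).filter
      fun g => (∀ k, g k ∈ w.parts) ∧ Function.Injective g) with hG
  have hmaps : ∀ p ∈ A.filter fun p => phi p = w, chi i p ∈ G := by
    intro p hp
    simp only [hA, mem_filter, mem_univ, true_and] at hp
    obtain ⟨hc, hphi⟩ := hp
    simp only [hG, mem_filter, mem_univ, true_and]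
    refine ⟨fun k => ?_, chi_inj hc⟩
    rw [← hphi, parts_phi, chi_eq_B hc]
    exact mem_image_of_mem _ (mem_univ _)
  rw [Finset.card_eq_sum_card_fiberwise hmaps]
  have hterm : ∀ g ∈ G, ((A.filter fun p => phi p = w).filter fun p => chi i p = g).card
      = ∏ q ∈ w.parts, (q.card).factorial := by
    intro g hg
    simp only [hG, mem_filter, mem_univ, true_and] at hg
    obtain ⟨hg1, hg2⟩ := hg
    have : (A.filter fun p => phi p = w).filter (fun p => chi i p = g)
        = A.filter fun p => chi i p = g := by
      ext p
      simp only [hA, mem_filter, mem_univ, true_and]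
      constructor
      · rintro ⟨⟨hc, _⟩, hchi⟩
        exact ⟨hc, hchi⟩
      · rintro ⟨hc, hchi⟩
        refine ⟨⟨hc, ?_⟩, hchi⟩
        apply Finpartition.ext
        rw [parts_phi, ← image_chi hc, hchi, image_g_eq_parts hw hg1 hg2]
    rw [this, hA]
    exact card_fiber_g w hw g hg1 hg2
  rw [Finset.sum_congr rfl hterm, Finset.sum_const, smul_eq_mul, hG,
    card_orderings w hw]

theorem main (n i : ℕ) (hn : 0 < n) (hi1 : 1 ≤ i) (hin : i ≤ n) :
    ∑ w ∈ Finset.univ.filter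
        (fun w : Finpartition (Finset.univ : Finset (Fin n)) => w.parts.card = i),
      Nat.factorial i * ∏ p ∈ w.parts, Nat.factorial p.card
    = Nat.factorial n * Nat.choose (n - 1) (i - 1) := by
  classical
  set A := ((univ : Finset (T n)).filter fun p => p.2.length = i) with hA
  have hmaps : ∀ p ∈ A, phi p ∈ Finset.univ.filter
      (fun w : Finpartition (Finset.univ : Finset (Fin n)) => w.parts.card = i) := by
    intro p hp
    simp only [hA, mem_filter, mem_univ, true_and] at hp ⊢
    rw [card_parts_phi, hp]
  have h1 : A.card = ∑ w ∈ Finset.univ.filter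
      (fun w : Finpartition (Finset.univ : Finset (Fin n)) => w.parts.card = i),
      (A.filter fun p => phi p = w).card := Finset.card_eq_sum_card_fiberwise hmaps
  have h2 : A.card = Nat.factorial n * Nat.choose (n - 1) (i - 1) := by
    have : A = (univ : Finset (Equiv.Perm (Fin n))) ×ˢ
        ((univ : Finset (Composition n)).filter fun c => c.length = i) := by
      ext p
      simp [hA, Finset.mem_product]
    rw [this, Finset.card_product, card_univ, Fintype.card_perm, Fintype.card_fin,
      card_compositions n i hn hi1]
  rw [← h2, h1]
  apply Finset.sum_congr rfl
  intro w hww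
  simp only [mem_filter, mem_univ, true_and] at hww
  exact (card_fiber_w w hww).symm

end OOPC

theorem ordered_ordered_partition_count (n i : ℕ) (hn : 0 < n) (hi1 : 1 ≤ i) (hin : i ≤ n) :
    ∑ w ∈ Finset.univ.filter
        (fun w : Finpartition (Finset.univ : Finset (Fin n)) => w.parts.card = i),
      Nat.factorial i * ∏ p ∈ w.parts, Nat.factorial p.card
    = Nat.factorial n * Nat.choose (n - 1) (i - 1) :=
  OOPC.main n i hn hi1 hin
end
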